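/- For all x, y ∈ Ω = {0,1}^n with x ⪯ y and every i ∈ {1,…,n}, the function φ_i^{x,y} on {0,1}² is a well-defined probability mass function and is a monotone coupling of the distancing node transition law ℙ_i^d(x,·) and the benchmark node transition law ℙ_i(y,·) on {0,1} with the usual order. -/
import Mathlib


open Finset Filter Topology Matrix

noncomputable section

/-- Awareness information received by node `i`: a weighted combination of the fraction of
infected social-network neighbors and the global fraction of infected nodes. -/
def infoAwareness (n : ℕ) (GI : SimpleGraph (Fin n)) [DecidableRel GI.Adj]
    (α : ℝ) (x : Fin n → ℝ) (i : Fin n) : ℝ :=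
  (α / ((GI.neighborFinset i).card : ℝ)) * ∑ j ∈ GI.neighborFinset i, x j
    + ((1 - α) / (n : ℝ)) * ∑ j, x j

/-- Social distancing action of node `i`. -/
def distAction (n : ℕ) (GI : SimpleGraph (Fin n)) [DecidableRel GI.Adj]
    (α : ℝ) (x : Fin n → ℝ) (i : Fin n) : ℝ :=
  1 - infoAwareness n GI α x i

/-- Benchmark susceptible-to-infected probability `p01_i(x)`. -/
def p01Bench (n : ℕ) (GC : SimpleGraph (Fin n)) [DecidableRel GC.Adj]
    (β : ℝ) (x : Fin n → ℝ) (i : Fin n) : ℝ :=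
  1 - ∏ j ∈ GC.neighborFinset i, (1 - β * x j)

/-- Distancing susceptible-to-infected probability `p01d_i(x)`. -/
def p01Dist (n : ℕ) (GC GI : SimpleGraph (Fin n)) [DecidableRel GC.Adj] [DecidableRel GI.Adj]
    (α β : ℝ) (x : Fin n → ℝ) (i : Fin n) : ℝ :=
  1 - ∏ j ∈ GC.neighborFinset i, (1 - β * distAction n GI α x i * x j)

/-- Distancing mean-field map `φ`. -/
def phiMap (n : ℕ) (GC GI : SimpleGraph (Fin n)) [DecidableRel GC.Adj] [DecidableRel GI.Adj]
    (α β δ : ℝ) (x : Fin n → ℝ) (i : Fin n) : ℝ :=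
  (1 - δ) * x i + (1 - (1 - δ) * x i) * p01Dist n GC GI α β x i

/-- Benchmark mean-field map `ψ`. -/
def psiMap (n : ℕ) (GC : SimpleGraph (Fin n)) [DecidableRel GC.Adj]
    (β δ : ℝ) (x : Fin n → ℝ) (i : Fin n) : ℝ :=
  (1 - δ) * x i + (1 - (1 - δ) * x i) * p01Bench n GC β x i

end

/-- A probability mass function on a countable (or arbitrary) type. -/
def IsPMF {X : Type*} (p : X → ℝ) : Prop := (∀ x, 0 ≤ p x) ∧ HasSum p 1

/-- `p` is a monotone coupling of the probability mass functions `p1` and `p2` on the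
partially ordered set `X`: it is a pmf on `X × X` vanishing off `{(x,y) : x ⪯ y}` whose
first marginal is `p1` and second marginal is `p2`. -/
def IsMonotoneCoupling {X : Type*} [PartialOrder X] (p : X × X → ℝ) (p1 p2 : X → ℝ) : Prop :=
  IsPMF p ∧ IsPMF p1 ∧ IsPMF p2 ∧
  (∀ x y : X, ¬ x ≤ y → p (x, y) = 0) ∧
  (∀ x, ∑' y, p (x, y) = p1 x) ∧
  (∀ y, ∑' x, p (x, y) = p2 y)

noncomputable section

/-- Embedding of a binary epidemic state into `[0,1]^n`. -/
def stateVec (n : ℕ) (s : Fin n → Bool) : Fin n → ℝ := fun j => if s j then 1 else 0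

/-- Benchmark node-level transition probabilities `ℙ_i(s, ·)` on `{0,1}`. -/
def nodeBench (n : ℕ) (GC : SimpleGraph (Fin n)) [DecidableRel GC.Adj] (β δ : ℝ)
    (s : Fin n → Bool) (i : Fin n) : Bool → ℝ := fun b =>
  if s i then
    (if b then 1 - δ * (1 - p01Bench n GC β (stateVec n s) i)
     else δ * (1 - p01Bench n GC β (stateVec n s) i))
  else
    (if b then p01Bench n GC β (stateVec n s) i
     else 1 - p01Bench n GC β (stateVec n s) i)

/-- Distancing node-level transition probabilities `ℙ_i^d(s, ·)` on `{0,1}`. -/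
def nodeDist (n : ℕ) (GC GI : SimpleGraph (Fin n)) [DecidableRel GC.Adj] [DecidableRel GI.Adj]
    (α β δ : ℝ) (s : Fin n → Bool) (i : Fin n) : Bool → ℝ := fun b =>
  if s i then
    (if b then 1 - δ * (1 - p01Dist n GC GI α β (stateVec n s) i)
     else δ * (1 - p01Dist n GC GI α β (stateVec n s) i))
  else
    (if b then p01Dist n GC GI α β (stateVec n s) i
     else 1 - p01Dist n GC GI α β (stateVec n s) i)

/-- Benchmark Markov transition matrix `K(s,s') = ∏ i, ℙ_i(s, s'_i)`. -/
def Kbench (n : ℕ) (GC : SimpleGraph (Fin n)) [DecidableRel GC.Adj] (β δ : ℝ)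
    (s s' : Fin n → Bool) : ℝ := ∏ i, nodeBench n GC β δ s i (s' i)

/-- Distancing Markov transition matrix `K_d(s,s') = ∏ i, ℙ_i^d(s, s'_i)`. -/
def Kdist (n : ℕ) (GC GI : SimpleGraph (Fin n)) [DecidableRel GC.Adj] [DecidableRel GI.Adj]
    (α β δ : ℝ) (s s' : Fin n → Bool) : ℝ := ∏ i, nodeDist n GC GI α β δ s i (s' i)

/-- Node-level coupling `φ_i^{x,y}` of `ℙ_i^d(x,·)` and `ℙ_i(y,·)`, for `x ⪯ y`.
(The case `x_i = 1, y_i = 0` cannot occur when `x ⪯ y`; it is assigned `0`.) -/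
def nodeCouple (n : ℕ) (GC GI : SimpleGraph (Fin n)) [DecidableRel GC.Adj] [DecidableRel GI.Adj]
    (α β δ : ℝ) (x y : Fin n → Bool) (i : Fin n) : Bool × Bool → ℝ := fun ab =>
  match x i, y i, ab.1, ab.2 with
  | true, true, false, false =>
      δ * (1 - p01Bench n GC β (stateVec n y) i)
  | true, true, false, true =>
      δ * (p01Bench n GC β (stateVec n y) i - p01Dist n GC GI α β (stateVec n x) i)
  | true, true, true, false => 0
  | true, true, true, true =>
      1 - δ * (1 - p01Dist n GC GI α β (stateVec n x) i)
  | false, false, false, false =>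
      1 - p01Bench n GC β (stateVec n y) i
  | false, false, false, true =>
      p01Bench n GC β (stateVec n y) i - p01Dist n GC GI α β (stateVec n x) i
  | false, false, true, false => 0
  | false, false, true, true =>
      p01Dist n GC GI α β (stateVec n x) i
  | false, true, false, false =>
      δ * (1 - p01Bench n GC β (stateVec n y) i)
  | false, true, false, true =>
      1 - p01Dist n GC GI α β (stateVec n x) i - δ * (1 - p01Bench n GC β (stateVec n y) i)
  | false, true, true, false => 0
  | false, true, true, true =>
      p01Dist n GC GI α β (stateVec n x) i
  | true, false, _, _ => 0

/-- State-level coupling `φ^{x,y}(ω,ω') = ∏ i, φ_i^{x,y}(ω_i, ω'_i)`. -/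
def stateCouple (n : ℕ) (GC GI : SimpleGraph (Fin n)) [DecidableRel GC.Adj] [DecidableRel GI.Adj]
    (α β δ : ℝ) (x y : Fin n → Bool) (ω ω' : Fin n → Bool) : ℝ :=
  ∏ i, nodeCouple n GC GI α β δ x y i (ω i, ω' i)

end

section AuxLemmas

lemma stateVec_nonneg {n : ℕ} (x : Fin n → Bool) (j : Fin n) : 0 ≤ stateVec n x j := by
  unfold stateVec; split <;> norm_num

lemma stateVec_le_one {n : ℕ} (x : Fin n → Bool) (j : Fin n) : stateVec n x j ≤ 1 := by
  unfold stateVec; split <;> norm_num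

lemma stateVec_mono {n : ℕ} {x y : Fin n → Bool} (h : ∀ i, x i ≤ y i) (j : Fin n) :
    stateVec n x j ≤ stateVec n y j := by
  have hj := h j
  unfold stateVec
  cases hx : x j <;> cases hy : y j <;> rw [hx, hy] at hj <;>
    first
      | exact absurd hj (by decide)
      | norm_num

lemma infoAwareness_mem {n : ℕ} {GI : SimpleGraph (Fin n)} [DecidableRel GI.Adj]
    (hn : 0 < n) (hGI : ∀ i, (GI.neighborFinset i).Nonempty)
    {α : ℝ} (hα : α ∈ Set.Icc (0:ℝ) 1) (x : Fin n → Bool) (i : Fin n) :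
    infoAwareness n GI α (stateVec n x) i ∈ Set.Icc (0:ℝ) 1 := by
  obtain ⟨hα0, hα1⟩ := hα
  have hc : (0:ℝ) < ((GI.neighborFinset i).card : ℝ) := by
    exact_mod_cast Finset.card_pos.2 (hGI i)
  have hnR : (0:ℝ) < (n : ℝ) := by exact_mod_cast hn
  have hs1 : 0 ≤ ∑ j ∈ GI.neighborFinset i, stateVec n x j :=
    Finset.sum_nonneg fun j _ => stateVec_nonneg x j
  have hs1' : ∑ j ∈ GI.neighborFinset i, stateVec n x j ≤ ((GI.neighborFinset i).card : ℝ) := by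
    calc ∑ j ∈ GI.neighborFinset i, stateVec n x j
        ≤ ∑ _j ∈ GI.neighborFinset i, (1:ℝ) :=
          Finset.sum_le_sum fun j _ => stateVec_le_one x j
      _ = _ := by simp
  have hs2 : 0 ≤ ∑ j, stateVec n x j := Finset.sum_nonneg fun j _ => stateVec_nonneg x j
  have hs2' : ∑ j, stateVec n x j ≤ (n : ℝ) := by
    calc ∑ j, stateVec n x j ≤ ∑ _j : Fin n, (1:ℝ) :=
          Finset.sum_le_sum fun j _ => stateVec_le_one x j
      _ = n := by simp
  have hd1 : 0 ≤ α / ((GI.neighborFinset i).card : ℝ) := div_nonneg hα0 hc.le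
  have hd2 : 0 ≤ (1 - α) / (n : ℝ) := div_nonneg (by linarith) hnR.le
  unfold infoAwareness
  constructor
  · have := mul_nonneg hd1 hs1
    have := mul_nonneg hd2 hs2
    linarith
  · have h1 : α / ((GI.neighborFinset i).card : ℝ) * ∑ j ∈ GI.neighborFinset i, stateVec n x j
        ≤ α / ((GI.neighborFinset i).card : ℝ) * ((GI.neighborFinset i).card : ℝ) :=
      mul_le_mul_of_nonneg_left hs1' hd1
    have h2 : (1 - α) / (n : ℝ) * ∑ j, stateVec n x j ≤ (1 - α) / (n : ℝ) * (n : ℝ) :=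
      mul_le_mul_of_nonneg_left hs2' hd2
    rw [div_mul_cancel₀ _ hc.ne'] at h1
    rw [div_mul_cancel₀ _ hnR.ne'] at h2
    linarith

lemma p01_bounds {n : ℕ} {GC GI : SimpleGraph (Fin n)} [DecidableRel GC.Adj] [DecidableRel GI.Adj]
    (hn : 0 < n) (hGI : ∀ i, (GI.neighborFinset i).Nonempty)
    {α β : ℝ} (hα : α ∈ Set.Icc (0:ℝ) 1) (hβ0 : 0 ≤ β) (hβ1 : β ≤ 1)
    {x y : Fin n → Bool} (hxy : ∀ i, x i ≤ y i) (i : Fin n) :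
    0 ≤ p01Dist n GC GI α β (stateVec n x) i ∧
    p01Dist n GC GI α β (stateVec n x) i ≤ p01Bench n GC β (stateVec n y) i ∧
    p01Bench n GC β (stateVec n y) i ≤ 1 := by
  have hμ := infoAwareness_mem hn hGI hα x i
  have ha0 : 0 ≤ distAction n GI α (stateVec n x) i := by
    unfold distAction; linarith [hμ.2]
  have ha1 : distAction n GI α (stateVec n x) i ≤ 1 := by
    unfold distAction; linarith [hμ.1]
  have key : ∀ j ∈ GC.neighborFinset i,
      (0 ≤ 1 - β * stateVec n y j) ∧
      (1 - β * stateVec n y j ≤ 1 - β * distAction n GI α (stateVec n x) i * stateVec n x j) ∧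
      (1 - β * distAction n GI α (stateVec n x) i * stateVec n x j ≤ 1) := by
    intro j _
    have h0 := stateVec_nonneg x j
    have h1 := stateVec_le_one x j
    have h0' := stateVec_nonneg y j
    have h1' := stateVec_le_one y j
    have hm := stateVec_mono hxy j
    have h2 : distAction n GI α (stateVec n x) i * stateVec n x j ≤ stateVec n y j := by
      nlinarith
    have h3 := mul_le_mul_of_nonneg_left h2 hβ0
    have h4 : 0 ≤ β * (distAction n GI α (stateVec n x) i * stateVec n x j) :=
      mul_nonneg hβ0 (mul_nonneg ha0 h0)
    refine ⟨by nlinarith, ?_, ?_⟩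
    · rw [mul_assoc]; linarith
    · rw [mul_assoc]; linarith
  refine ⟨?_, ?_, ?_⟩
  · unfold p01Dist
    have : ∏ j ∈ GC.neighborFinset i,
        (1 - β * distAction n GI α (stateVec n x) i * stateVec n x j) ≤ 1 :=
      Finset.prod_le_one (fun j hj => le_trans (key j hj).1 (key j hj).2.1)
        (fun j hj => (key j hj).2.2)
    linarith
  · unfold p01Dist p01Bench
    have : ∏ j ∈ GC.neighborFinset i, (1 - β * stateVec n y j)
        ≤ ∏ j ∈ GC.neighborFinset i,
            (1 - β * distAction n GI α (stateVec n x) i * stateVec n x j) :=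
      Finset.prod_le_prod (fun j hj => (key j hj).1) (fun j hj => (key j hj).2.1)
    linarith
  · unfold p01Bench
    have : 0 ≤ ∏ j ∈ GC.neighborFinset i, (1 - β * stateVec n y j) :=
      Finset.prod_nonneg (fun j hj => (key j hj).1)
    linarith

end AuxLemmas

/-- for binary states `x ⪯ y` and every node `i`, the function
`φ_i^{x,y}` is a (well-defined) probability mass function on `{0,1}²` and is a monotone
coupling of the distancing node transition law `ℙ_i^d(x,·)` and the benchmark node
transition law `ℙ_i(y,·)` on `{0,1}` with the usual order. -/
theorem nodeCouple_is_monotone_coupling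
    (n : ℕ) (hn : 0 < n) (GC GI : SimpleGraph (Fin n)) [DecidableRel GC.Adj] [DecidableRel GI.Adj]
    (hGI : ∀ i, (GI.neighborFinset i).Nonempty)
    (α β δ : ℝ) (hα : α ∈ Set.Icc (0:ℝ) 1) (hβ : β ∈ Set.Ioo (0:ℝ) 1)
    (hδ : δ ∈ Set.Ioo (0:ℝ) 1)
    (x y : Fin n → Bool) (hxy : ∀ i, x i ≤ y i) (i : Fin n) :
    IsMonotoneCoupling (nodeCouple n GC GI α β δ x y i)
      (nodeDist n GC GI α β δ x i) (nodeBench n GC β δ y i) := by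
  obtain ⟨hβ0, hβ1⟩ := hβ
  obtain ⟨hδ0, hδ1⟩ := hδ
  obtain ⟨hpd0, hpdpb, hpb1⟩ := p01_bounds (GC := GC) (GI := GI) hn hGI hα hβ0.le hβ1.le hxy i
  have hxyi := hxy i
  cases hx : x i <;> cases hy : y i
  · -- x i = false, y i = false
    refine ⟨⟨?_, ?_⟩, ⟨?_, ?_⟩, ⟨?_, ?_⟩, ?_, ?_, ?_⟩
    · rintro ⟨a', b'⟩
      cases a' <;> cases b' <;> simp only [nodeCouple, hx, hy] <;> nlinarith
    · have h1 : ∑ ab : Bool × Bool, nodeCouple n GC GI α β δ x y i ab = 1 := by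
        rw [Fintype.sum_prod_type]
        simp only [Fintype.sum_bool, nodeCouple, hx, hy]
        ring
      exact h1 ▸ hasSum_fintype _
    · intro b; cases b <;> simp only [nodeDist, hx, Bool.false_eq_true, if_false, if_true] <;>
        nlinarith
    · have h1 : ∑ b : Bool, nodeDist n GC GI α β δ x i b = 1 := by
        simp only [Fintype.sum_bool, nodeDist, hx, Bool.false_eq_true, if_false, if_true]
        ring
      exact h1 ▸ hasSum_fintype _
    · intro b; cases b <;> simp only [nodeBench, hy, Bool.false_eq_true, if_false, if_true] <;>
        nlinarith
    · have h1 : ∑ b : Bool, nodeBench n GC β δ y i b = 1 := by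
        simp only [Fintype.sum_bool, nodeBench, hy, Bool.false_eq_true, if_false, if_true]
        ring
      exact h1 ▸ hasSum_fintype _
    · intro a' b' h
      cases a' <;> cases b' <;> simp only [nodeCouple, hx, hy] <;> simp at h
    · intro a'
      rw [tsum_fintype]
      cases a' <;>
        simp only [Fintype.sum_bool, nodeCouple, nodeDist, hx, hy, Bool.false_eq_true,
          if_false, if_true] <;> ring
    · intro b'
      rw [tsum_fintype]
      cases b' <;>
        simp only [Fintype.sum_bool, nodeCouple, nodeBench, hx, hy, Bool.false_eq_true,
          if_false, if_true] <;> ring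
  · -- x i = false, y i = true
    refine ⟨⟨?_, ?_⟩, ⟨?_, ?_⟩, ⟨?_, ?_⟩, ?_, ?_, ?_⟩
    · rintro ⟨a', b'⟩
      cases a' <;> cases b' <;> simp only [nodeCouple, hx, hy] <;> nlinarith
    · have h1 : ∑ ab : Bool × Bool, nodeCouple n GC GI α β δ x y i ab = 1 := by
        rw [Fintype.sum_prod_type]
        simp only [Fintype.sum_bool, nodeCouple, hx, hy]
        ring
      exact h1 ▸ hasSum_fintype _
    · intro b; cases b <;> simp only [nodeDist, hx, Bool.false_eq_true, if_false, if_true] <;>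
        nlinarith
    · have h1 : ∑ b : Bool, nodeDist n GC GI α β δ x i b = 1 := by
        simp only [Fintype.sum_bool, nodeDist, hx, Bool.false_eq_true, if_false, if_true]
        ring
      exact h1 ▸ hasSum_fintype _
    · intro b; cases b <;> simp only [nodeBench, hy, Bool.false_eq_true, if_false, if_true] <;>
        nlinarith
    · have h1 : ∑ b : Bool, nodeBench n GC β δ y i b = 1 := by
        simp only [Fintype.sum_bool, nodeBench, hy, Bool.false_eq_true, if_false, if_true]
        ring
      exact h1 ▸ hasSum_fintype _
    · intro a' b' h
      cases a' <;> cases b' <;> simp only [nodeCouple, hx, hy] <;> simp at h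
    · intro a'
      rw [tsum_fintype]
      cases a' <;>
        simp only [Fintype.sum_bool, nodeCouple, nodeDist, hx, hy, Bool.false_eq_true,
          if_false, if_true] <;> ring
    · intro b'
      rw [tsum_fintype]
      cases b' <;>
        simp only [Fintype.sum_bool, nodeCouple, nodeBench, hx, hy, Bool.false_eq_true,
          if_false, if_true] <;> ring
  · -- x i = true, y i = false : impossible
    rw [hx, hy] at hxyi
    exact absurd hxyi (by decide)
  · -- x i = true, y i = true
    refine ⟨⟨?_, ?_⟩, ⟨?_, ?_⟩, ⟨?_, ?_⟩, ?_, ?_, ?_⟩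
    · rintro ⟨a', b'⟩
      cases a' <;> cases b' <;> simp only [nodeCouple, hx, hy] <;> nlinarith
    · have h1 : ∑ ab : Bool × Bool, nodeCouple n GC GI α β δ x y i ab = 1 := by
        rw [Fintype.sum_prod_type]
        simp only [Fintype.sum_bool, nodeCouple, hx, hy]
        ring
      exact h1 ▸ hasSum_fintype _
    · intro b; cases b <;> simp only [nodeDist, hx, Bool.false_eq_true, if_false, if_true] <;>
        nlinarith
    · have h1 : ∑ b : Bool, nodeDist n GC GI α β δ x i b = 1 := by
        simp only [Fintype.sum_bool, nodeDist, hx, Bool.false_eq_true, if_false, if_true]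
        ring
      exact h1 ▸ hasSum_fintype _
    · intro b; cases b <;> simp only [nodeBench, hy, Bool.false_eq_true, if_false, if_true] <;>
        nlinarith
    · have h1 : ∑ b : Bool, nodeBench n GC β δ y i b = 1 := by
        simp only [Fintype.sum_bool, nodeBench, hy, Bool.false_eq_true, if_false, if_true]
        ring
      exact h1 ▸ hasSum_fintype _
    · intro a' b' h
      cases a' <;> cases b' <;> simp only [nodeCouple, hx, hy] <;> simp at h
    · intro a'
      rw [tsum_fintype]
      cases a' <;>
        simp only [Fintype.sum_bool, nodeCouple, nodeDist, hx, hy, Bool.false_eq_true,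
          if_false, if_true] <;> ring
    · intro b'
      rw [tsum_fintype]
      cases b' <;>
        simp only [Fintype.sum_bool, nodeCouple, nodeBench, hx, hy, Bool.false_eq_true,
          if_false, if_true] <;> ring
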